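/- For every ε > 0 there exists a constant C > 0 with the following property. Let N ∈ ℕ and let A ⊆ [N] have distinct subset products, such that the map a ↦ (v_p(a))_{p prime, N^{1/3} < p ≤ N} is injective on A and every a ∈ A is divisible by some prime in (N^{1/3}, N], and suppose the prime factorization graph G(A) contains no circuit of even length at most 2·N^{1/12}. Let P_□ = {p prime : N^{1/3} < p ≤ N^{1/2} and p² ∣ a for some a ∈ A}. If C_1, …, C_n are the edge sets of pairwise edge-disjoint cycles in G(A), each of odd length at most N^{1/12} and each containing a vertex belonging to P_□, then n ≤ C·N^{1/3+ε}. -/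

import Mathlib

/-!
Every `a ∈ A` has at most two prime factors above `N^{1/3}`, counted with multiplicity, since
three would multiply to more than `N`. Hence each edge `{u, v}` of `G(A)` is realized by some
`a ∈ A` whose valuations at these primes are `e_u + e_v` (with `e_1 = 0`), and these vectors tell
the edges apart; an element divisible by `p²`, `p ∈ P_□`, realizes the loop `{p, p}`.
Closing an odd cycle through `p ∈ P_□` by this loop gives an even closed trail, and the realizers of
its even-numbered and of its odd-numbered steps form disjoint sets `B, C ⊆ A` whose products have
the same valuation at every prime above `N^{1/3}`. The chosen vertices `p` are distinct, since two
odd cycles through one vertex form an even circuit of length at most `2 N^{1/12}`.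
For `T ⊆ [n]`, the sets `⋃_{i ∈ T} B_i ∪ ⋃_{i ∉ T} C_i` are then distinct subsets of `A` whose
products agree at all primes above `N^{1/3}`; by distinct subset products they are told apart by
their valuations at the at most `N^{1/3}` primes `q ≤ N^{1/3}`, each less than `N` (Legendre).
So `2^n ≤ N^{N^{1/3}}`, i.e. `n ≤ N^{1/3} log N / log 2`.
-/

/-- `PLM N p` : `p` is a prime in `(N^{1/3}, N]` (a "large or medium" prime). -/
def PLM (N : ℕ) (p : ℕ) : Prop :=
  p.Prime ∧ (N : ℝ) ^ ((1 : ℝ) / 3) < (p : ℝ) ∧ p ≤ N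

/-- The *prime factorization graph* of `A ⊆ [N]`: the vertices are the natural numbers
(only `1` and the primes in `(N^{1/3}, N]` can fail to be isolated); `1` is joined to a
prime `p ∈ (N^{1/3}, N]` if some `a ∈ A` has `v_p(a) = 1` and `v_q(a) = 0` for every
other prime `q ∈ (N^{1/3}, N]`; two distinct primes `p, q ∈ (N^{1/3}, N]` are joined if
some `a ∈ A` is divisible by both. -/
def pfGraph (N : ℕ) (A : Finset ℕ) : SimpleGraph ℕ where
  Adj x y := x ≠ y ∧
    ((x = 1 ∧ PLM N y ∧ ∃ a ∈ A, padicValNat y a = 1 ∧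
        ∀ q, PLM N q → q ≠ y → padicValNat q a = 0) ∨
     (y = 1 ∧ PLM N x ∧ ∃ a ∈ A, padicValNat x a = 1 ∧
        ∀ q, PLM N q → q ≠ x → padicValNat q a = 0) ∨
     (PLM N x ∧ PLM N y ∧ ∃ a ∈ A, x ∣ a ∧ y ∣ a))
  symm := by
    constructor
    intro x y ⟨hne, h⟩
    refine ⟨hne.symm, ?_⟩
    rcases h with h | h | ⟨hx, hy, a, ha, hxa, hya⟩
    · exact Or.inr (Or.inl h)
    · exact Or.inl h
    · exact Or.inr (Or.inr ⟨hy, hx, a, ha, hya, hxa⟩)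
  loopless := ⟨fun x h => h.1 rfl⟩

/-- The list of edges of the closed walk determined by the vertex list `l`. -/
def circuitEdgeList {V : Type*} (l : List V) : List (Sym2 V) :=
  (l.zip (l.rotate 1)).map fun p => s(p.1, p.2)

/-- `E` is the edge set of a circuit of length `k` in `G` : there are (not necessarily
distinct) vertices `v_1, …, v_k` such that the `k` edges
`{v_1,v_2}, {v_2,v_3}, …, {v_k,v_1}` all lie in `G`, are pairwise distinct, and make up
`E`. -/
def IsCircuit {V : Type*} (G : SimpleGraph V) (k : ℕ) (E : Set (Sym2 V)) : Prop :=
  ∃ l : List V, l.length = k ∧ l ≠ [] ∧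
    (∀ p ∈ l.zip (l.rotate 1), G.Adj p.1 p.2) ∧
    (circuitEdgeList l).Nodup ∧
    E = {e | e ∈ circuitEdgeList l}

/-- `E` is the edge set of a cycle of length `k` in `G` : as for a circuit, but the
vertices `v_1, …, v_k` are pairwise distinct. -/
def IsCycle {V : Type*} (G : SimpleGraph V) (k : ℕ) (E : Set (Sym2 V)) : Prop :=
  ∃ l : List V, l.length = k ∧ l ≠ [] ∧ l.Nodup ∧
    (∀ p ∈ l.zip (l.rotate 1), G.Adj p.1 p.2) ∧
    (circuitEdgeList l).Nodup ∧
    E = {e | e ∈ circuitEdgeList l}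

/-- A set of positive integers has *distinct subset products* if any two distinct
finite subsets have distinct products (the empty product is `1`). -/
def DistinctSubsetProds (A : Set ℕ) : Prop :=
  ∀ B C : Finset ℕ, ↑B ⊆ A → ↑C ⊆ A → ∏ b ∈ B, b = ∏ c ∈ C, c → B = C

/-- `Psq N A` is the set of primes `p ∈ (N^{1/3}, N^{1/2}]` such that `p²` divides some
element of `A`. -/
def Psq (N : ℕ) (A : Finset ℕ) : Set ℕ :=
  {p : ℕ | p.Prime ∧ (N : ℝ) ^ ((1 : ℝ) / 3) < (p : ℝ) ∧ (p : ℝ) ≤ (N : ℝ) ^ ((1 : ℝ) / 2) ∧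
    ∃ a ∈ A, p ^ 2 ∣ a}

open Finsupp Function

section LargePrimes

lemma rpow_one_third_lt_iff {N q : ℕ} : (N : ℝ) ^ ((1 : ℝ) / 3) < q ↔ N < q ^ 3 := by
  rw [one_div, Real.rpow_inv_lt_iff_of_pos (by positivity) (by positivity) (by norm_num)]
  norm_cast

lemma PLM.lt_pow_three {N q : ℕ} (h : PLM N q) : N < q ^ 3 :=
  rpow_one_third_lt_iff.mp h.2.1

lemma lt_mul_mul_of_lt_pow_three {N u v w : ℕ} (hu : N < u ^ 3) (hv : N < v ^ 3)
    (hw : N < w ^ 3) : N < u * v * w := by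
  refine lt_of_pow_lt_pow_left₀ 3 (Nat.zero_le _) ?_
  calc N ^ 3 = N * N * N := by ring
    _ < u ^ 3 * v ^ 3 * w ^ 3 := Nat.mul_lt_mul'' (Nat.mul_lt_mul'' hu hv) hw
    _ = (u * v * w) ^ 3 := by ring

lemma not_single_add_single_add_single_le {N a u v w : ℕ} (ha : a ∈ Set.Icc 1 N)
    (hu : PLM N u) (hv : PLM N v) (hw : PLM N w) :
    ¬ single u 1 + single v 1 + single w 1 ≤ a.factorization := by
  intro hle
  have hdvd : u * v * w ∣ a := by
    rw [← Nat.factorization_le_iff_dvd (by simp [hu.1.ne_zero, hv.1.ne_zero, hw.1.ne_zero])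
      (by have := ha.1; omega), Nat.factorization_mul (by simp [hu.1.ne_zero, hv.1.ne_zero])
      hw.1.ne_zero, Nat.factorization_mul hu.1.ne_zero hv.1.ne_zero, hu.1.factorization,
      hv.1.factorization, hw.1.factorization]
    exact hle
  have := Nat.le_of_dvd ha.1 hdvd
  have := lt_mul_mul_of_lt_pow_three hu.lt_pow_three hv.lt_pow_three hw.lt_pow_three
  have := ha.2
  omega

/-- `single 1 1` vanishes at every prime, so the vertex `1` contributes nothing. -/
def IsRealizer (N a u v : ℕ) : Prop :=
  ∀ q, PLM N q → a.factorization q = (single u 1 + single v 1 : ℕ →₀ ℕ) q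

lemma isRealizer_of_mul_dvd {N a u v : ℕ} (ha : a ∈ Set.Icc 1 N) (hu : PLM N u)
    (hv : PLM N v) (huva : u * v ∣ a) : IsRealizer N a u v := by
  intro q hq
  have hle : single u 1 + single v 1 ≤ a.factorization := by
    rw [← hu.1.factorization, ← hv.1.factorization, ← Nat.factorization_mul hu.1.ne_zero
      hv.1.ne_zero, Nat.factorization_le_iff_dvd (by simp [hu.1.ne_zero, hv.1.ne_zero])
      (by have := ha.1; omega)]
    exact huva
  refine (hle q).antisymm' (not_lt.mp fun hlt =>
    not_single_add_single_add_single_le ha hu hv hq (Finsupp.le_def.mpr fun r => ?_))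
  rcases eq_or_ne q r with rfl | hqr
  · simpa using hlt
  · simpa [single_apply, hqr] using hle r

end LargePrimes

section Realizers

variable {N : ℕ} {A : Finset ℕ}

/-- An element of `A` divisible by `p²`, `p ∈ P_□`, realizes the loop `{p, p}`. -/
def LoopedAdj (N : ℕ) (A : Finset ℕ) (u v : ℕ) : Prop :=
  (pfGraph N A).Adj u v ∨ (u = v ∧ u ∈ Psq N A)

lemma plm_of_mem_psq (hA : ↑A ⊆ Set.Icc 1 N) {p : ℕ} (hp : p ∈ Psq N A) : PLM N p := by
  obtain ⟨hpp, hp3, -, a, ha, hpa⟩ := hp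
  refine ⟨hpp, hp3, ?_⟩
  have := Nat.le_of_dvd (hA ha).1 hpa
  have := (hA ha).2
  nlinarith [hpp.two_le]

lemma LoopedAdj.exists_isRealizer (hA : ↑A ⊆ Set.Icc 1 N) {u v : ℕ} (h : LoopedAdj N A u v) :
    ∃ a ∈ A, IsRealizer N a u v := by
  rcases h with ⟨huv, ⟨rfl, -, a, ha, hva, hv⟩ | ⟨rfl, -, a, ha, hua, hu⟩ |
    ⟨hu, hv, a, ha, hua, hva⟩⟩ | ⟨rfl, hp⟩
  · refine ⟨a, ha, fun q hq => ?_⟩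
    rw [Nat.factorization_def a hq.1]
    rcases eq_or_ne v q with rfl | hvq
    · simp [hq.1.ne_one.symm, hva]
    · simp [hq.1.ne_one.symm, hvq, hv q hq hvq.symm]
  · refine ⟨a, ha, fun q hq => ?_⟩
    rw [Nat.factorization_def a hq.1]
    rcases eq_or_ne u q with rfl | huq
    · simp [hq.1.ne_one.symm, hua]
    · simp [hq.1.ne_one.symm, huq, hu q hq huq.symm]
  · exact ⟨a, ha, isRealizer_of_mul_dvd (hA ha) hu hv
      (Nat.Coprime.mul_dvd_of_dvd_of_dvd ((Nat.coprime_primes hu.1 hv.1).mpr huv) hua hva)⟩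
  · obtain ⟨-, -, -, a, ha, hpa⟩ := id hp
    have hp := plm_of_mem_psq hA hp
    exact ⟨a, ha, isRealizer_of_mul_dvd (hA ha) hp hp (by rwa [← sq])⟩

lemma mem_of_forall_plm_single_add_single_eq {u v a b : ℕ} (hu : u = 1 ∨ PLM N u)
    (hv : v = 1 ∨ PLM N v) (huv : u ≠ 1 ∨ v ≠ 1) (ha : a = 1 ∨ PLM N a) (hb : b = 1 ∨ PLM N b)
    (h : ∀ q, PLM N q →
      (single u 1 + single v 1 : ℕ →₀ ℕ) q = (single a 1 + single b 1 : ℕ →₀ ℕ) q) :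
    u ∈ s(a, b) := by
  simp only [Finsupp.coe_add, Pi.add_apply, single_apply] at h
  rw [Sym2.mem_iff]
  by_contra hab
  simp only [not_or] at hab
  rcases hu with rfl | hu
  · have hv := hv.resolve_left (huv.resolve_left (not_not.mpr rfl))
    have hav : a = v := by
      have e := h a (ha.resolve_left (Ne.symm hab.1))
      split_ifs at e <;> omega
    have hbv : b = v := by
      have e := h b (hb.resolve_left (Ne.symm hab.2))
      split_ifs at e <;> omega
    have e := h v hv
    split_ifs at e <;> omega
  · have e := h u hu
    split_ifs at e <;> omega

lemma LoopedAdj.endpoints (hA : ↑A ⊆ Set.Icc 1 N) {u v : ℕ} (h : LoopedAdj N A u v) :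
    (u = 1 ∨ PLM N u) ∧ (v = 1 ∨ PLM N v) ∧ (u ≠ 1 ∨ v ≠ 1) := by
  rcases h with ⟨huv, ⟨rfl, hv, -⟩ | ⟨rfl, hu, -⟩ | ⟨hu, hv, -⟩⟩ | ⟨rfl, hp⟩
  · exact ⟨Or.inl rfl, Or.inr hv, Or.inr huv.symm⟩
  · exact ⟨Or.inr hu, Or.inl rfl, Or.inl huv⟩
  · exact ⟨Or.inr hu, Or.inr hv, Or.inl hu.1.ne_one⟩
  · have hp := plm_of_mem_psq hA hp
    exact ⟨Or.inr hp, Or.inr hp, Or.inl hp.1.ne_one⟩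

lemma LoopedAdj.sym2_eq_of_isRealizer (hA : ↑A ⊆ Set.Icc 1 N) {u v u' v' a : ℕ}
    (h : LoopedAdj N A u v) (h' : LoopedAdj N A u' v') (ha : IsRealizer N a u v)
    (ha' : IsRealizer N a u' v') : s(u, v) = s(u', v') := by
  obtain ⟨hu, hv, huv⟩ := h.endpoints hA
  obtain ⟨hu', hv', huv'⟩ := h'.endpoints hA
  have heq : ∀ q, PLM N q → (single u 1 + single v 1 : ℕ →₀ ℕ) q =
      (single u' 1 + single v' 1 : ℕ →₀ ℕ) q := fun q hq => by rw [← ha q hq, ← ha' q hq]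
  refine Sym2.ext fun x => ⟨fun hx => ?_, fun hx => ?_⟩
  · rcases Sym2.mem_iff.mp hx with rfl | rfl
    · exact mem_of_forall_plm_single_add_single_eq hu hv huv hu' hv' heq
    · exact mem_of_forall_plm_single_add_single_eq hv hu huv.symm hu' hv' fun q hq => by
        rw [add_comm (single x 1)]; exact heq q hq
  · rcases Sym2.mem_iff.mp hx with rfl | rfl
    · exact mem_of_forall_plm_single_add_single_eq hu' hv' huv' hu hv fun q hq => (heq q hq).symm
    · exact mem_of_forall_plm_single_add_single_eq hv' hu' huv'.symm hu hv fun q hq => by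
        rw [add_comm (single x 1)]; exact (heq q hq).symm

end Realizers

section ClosedTrails

variable {V : Type*}

lemma IsCycle.isCircuit {G : SimpleGraph V} {k : ℕ} {E : Set (Sym2 V)} (h : IsCycle G k E) :
    IsCircuit G k E :=
  let ⟨l, hl, hne, _, hadj, hnd, hE⟩ := h
  ⟨l, hl, hne, hadj, hnd, hE⟩

lemma zip_rotate_one_eq_map_range (l : List V) (d : V) :
    l.zip (l.rotate 1) =
      (List.range l.length).map fun m => (l.getD m d, l.getD ((m + 1) % l.length) d) := by
  refine List.ext_getElem (by simp) fun m h₁ h₂ => ?_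
  simp only [List.length_zip, List.length_rotate, min_self] at h₁
  simp [List.getElem_rotate, h₁, Nat.mod_lt _ (Nat.zero_lt_of_lt h₁)]

lemma circuitEdgeList_eq_map_range (l : List V) (d : V) :
    circuitEdgeList l =
      (List.range l.length).map fun m => s(l.getD m d, l.getD ((m + 1) % l.length) d) := by
  rw [circuitEdgeList, zip_rotate_one_eq_map_range l d, List.map_map]
  rfl

structure IsClosedTrail (r : V → V → Prop) (k : ℕ) (v : ℕ → V) : Prop where
  closed : v k = v 0
  adj : ∀ m < k, r (v m) (v (m + 1))
  injOn_edge : Set.InjOn (fun m => s(v m, v (m + 1))) (Set.Iio k)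

def trailEdges (k : ℕ) (v : ℕ → V) : Set (Sym2 V) :=
  {e | ∃ m < k, s(v m, v (m + 1)) = e}

lemma IsCircuit.exists_isClosedTrail {G : SimpleGraph V} {k : ℕ} {E : Set (Sym2 V)}
    (hE : IsCircuit G k E) {e : Sym2 V} (he : e ∈ E) {x : V} (hx : x ∈ e) :
    ∃ v : ℕ → V, v 0 = x ∧ IsClosedTrail G.Adj k v ∧ trailEdges k v ⊆ E := by
  obtain ⟨l, rfl, hl, hadj, hnd, rfl⟩ := hE
  have hk : 0 < l.length := List.length_pos_iff.mpr hl
  rw [zip_rotate_one_eq_map_range l x] at hadj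
  rw [circuitEdgeList_eq_map_range l x] at hnd he ⊢
  have hmod : ∀ m, (m + 1) % l.length < l.length := fun m => Nat.mod_lt _ hk
  obtain ⟨j, hj, hjx⟩ : ∃ j < l.length, l.getD j x = x := by
    obtain ⟨i, hi, rfl⟩ := List.mem_map.mp he
    rcases Sym2.mem_iff.mp hx with h | h
    · exact ⟨i, List.mem_range.mp hi, h.symm⟩
    · exact ⟨_, hmod i, h.symm⟩
  -- the trail reads `l` cyclically, starting at the position `j` of `x`
  have hshift : ∀ m, ((m + j) % l.length + 1) % l.length = (m + 1 + j) % l.length := fun m => by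
    rw [Nat.mod_add_mod, Nat.add_right_comm]
  refine ⟨fun m => l.getD ((m + j) % l.length) x, ?_, ⟨?_, fun m _ => ?_, ?_⟩, ?_⟩
  · simpa [Nat.mod_eq_of_lt hj] using hjx
  · simp
  · have := hadj _ (List.mem_map.mpr ⟨(m + j) % l.length, List.mem_range.mpr
      (Nat.mod_lt _ hk), rfl⟩)
    rwa [hshift] at this
  · intro m hm m' hm' h
    have := List.inj_on_of_nodup_map hnd (List.mem_range.mpr (Nat.mod_lt (m + j) hk))
      (List.mem_range.mpr (Nat.mod_lt (m' + j) hk)) (by simpa only [hshift] using h)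
    have := Nat.ModEq.add_right_cancel' j this
    rwa [Nat.ModEq, Nat.mod_eq_of_lt hm, Nat.mod_eq_of_lt hm'] at this
  · rintro _ ⟨m, -, rfl⟩
    refine List.mem_map.mpr ⟨(m + j) % l.length, List.mem_range.mpr (Nat.mod_lt _ hk), ?_⟩
    simp only [hshift]

namespace IsClosedTrail

variable {r r' : V → V → Prop} {k : ℕ} {v : ℕ → V}

lemma apply_succ_mod (hv : IsClosedTrail r k v) {m : ℕ} (hm : m < k) :
    v ((m + 1) % k) = v (m + 1) := by
  rcases (show m + 1 ≤ k from hm).lt_or_eq with h | h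
  · rw [Nat.mod_eq_of_lt h]
  · rw [h, Nat.mod_self, hv.closed]

lemma isCircuit {G : SimpleGraph V} (hv : IsClosedTrail G.Adj k v) (hk : 0 < k) :
    IsCircuit G k (trailEdges k v) := by
  have hget : ∀ m ∈ List.range k, ((List.range k).map v).getD m (v 0) = v m := fun m hm => by
    simp [List.mem_range.mp hm]
  have hzip : ((List.range k).map v).zip (((List.range k).map v).rotate 1) =
      (List.range k).map fun m => (v m, v (m + 1)) := by
    rw [zip_rotate_one_eq_map_range _ (v 0), List.length_map, List.length_range]
    refine List.map_congr_left fun m hm => ?_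
    rw [hget m hm, hget _ (List.mem_range.mpr (Nat.mod_lt _ hk)),
      hv.apply_succ_mod (List.mem_range.mp hm)]
  have hedges : circuitEdgeList ((List.range k).map v) =
      (List.range k).map fun m => s(v m, v (m + 1)) := by
    rw [circuitEdgeList, hzip, List.map_map]
    rfl
  refine ⟨(List.range k).map v, by simp, by simp [hk.ne'], ?_, ?_, ?_⟩
  · rw [hzip]
    simp only [List.mem_map, List.mem_range]
    rintro _ ⟨m, hm, rfl⟩
    exact hv.adj m hm
  · rw [hedges]
    exact List.Nodup.map_on (fun m hm m' hm' h => hv.injOn_edge (List.mem_range.mp hm)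
      (List.mem_range.mp hm') h) List.nodup_range
  · ext e
    simp [trailEdges, hedges]

lemma mono (hv : IsClosedTrail r k v) (hr : ∀ a b, r a b → r' a b) :
    IsClosedTrail r' k v :=
  ⟨hv.closed, fun m hm => hr _ _ (hv.adj m hm), hv.injOn_edge⟩

lemma loop {x : V} (hx : r x x) : IsClosedTrail r 1 fun _ => x :=
  ⟨rfl, fun _ _ => hx, fun m hm m' hm' _ => by
    simp only [Set.mem_Iio, Nat.lt_one_iff] at hm hm'
    rw [hm, hm']⟩

lemma diag_not_mem_trailEdges {G : SimpleGraph V} (hv : IsClosedTrail G.Adj k v) (x : V) :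
    s(x, x) ∉ trailEdges k v := by
  rintro ⟨m, hm, h⟩
  exact (hv.adj m hm).ne (Sym2.mk_isDiag_iff.mp (h ▸ Sym2.mk_isDiag_iff.mpr rfl))

end IsClosedTrail

def trailAppend (k : ℕ) (v v' : ℕ → V) (m : ℕ) : V :=
  if m ≤ k then v m else v' (m - k)

lemma trailAppend_of_le {k m : ℕ} {v v' : ℕ → V} (hm : m ≤ k) : trailAppend k v v' m = v m :=
  if_pos hm

lemma trailAppend_of_ge {k m : ℕ} {v v' : ℕ → V} (h : v k = v' 0) (hm : k ≤ m) :
    trailAppend k v v' m = v' (m - k) := by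
  rcases hm.lt_or_eq with hm | rfl
  · exact if_neg hm.not_ge
  · rw [trailAppend_of_le le_rfl, h, Nat.sub_self]

lemma trailAppend_edge {k m : ℕ} {v v' : ℕ → V} (h : v k = v' 0) :
    s(trailAppend k v v' m, trailAppend k v v' (m + 1)) =
      if m < k then s(v m, v (m + 1)) else s(v' (m - k), v' (m - k + 1)) := by
  split_ifs with hm
  · rw [trailAppend_of_le hm.le, trailAppend_of_le hm]
  · rw [trailAppend_of_ge h (not_lt.mp hm), trailAppend_of_ge h (by omega),
      Nat.sub_add_comm (not_lt.mp hm)]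

lemma trailEdges_trailAppend {k k' : ℕ} {v v' : ℕ → V} (h : v k = v' 0) :
    trailEdges (k + k') (trailAppend k v v') = trailEdges k v ∪ trailEdges k' v' := by
  ext e
  constructor
  · rintro ⟨m, hm, rfl⟩
    rw [trailAppend_edge h]
    split_ifs with hmk
    · exact Or.inl ⟨m, hmk, rfl⟩
    · exact Or.inr ⟨m - k, by omega, rfl⟩
  · rintro (⟨m, hm, rfl⟩ | ⟨m, hm, rfl⟩)
    · exact ⟨m, by omega, by rw [trailAppend_edge h, if_pos hm]⟩
    · exact ⟨m + k, by omega, by rw [trailAppend_edge h, if_neg (by omega), Nat.add_sub_cancel]⟩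

lemma IsClosedTrail.append {r : V → V → Prop} {k k' : ℕ} {v v' : ℕ → V}
    (hv : IsClosedTrail r k v) (hv' : IsClosedTrail r k' v') (h0 : v' 0 = v 0)
    (hdisj : Disjoint (trailEdges k v) (trailEdges k' v')) :
    IsClosedTrail r (k + k') (trailAppend k v v') := by
  have h : v k = v' 0 := hv.closed.trans h0.symm
  refine ⟨?_, fun m hm => ?_, fun m hm m' hm' hmm' => ?_⟩
  · rw [trailAppend_of_ge h (Nat.le_add_right k k'), trailAppend_of_le (Nat.zero_le k),
      Nat.add_sub_cancel_left, hv'.closed, h0]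
  · by_cases hmk : m < k
    · rw [trailAppend_of_le hmk.le, trailAppend_of_le hmk]
      exact hv.adj m hmk
    · rw [trailAppend_of_ge h (not_lt.mp hmk), trailAppend_of_ge h (by omega),
        Nat.sub_add_comm (not_lt.mp hmk)]
      exact hv'.adj _ (by omega)
  · simp only [Set.mem_Iio] at hm hm'
    simp only [trailAppend_edge h] at hmm'
    split_ifs at hmm' with hmk hmk' hmk'
    · exact hv.injOn_edge hmk hmk' hmm'
    · exact (Set.disjoint_left.mp hdisj ⟨m, hmk, rfl⟩ ⟨m' - k, by omega, hmm'.symm⟩).elim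
    · exact (Set.disjoint_left.mp hdisj ⟨m', hmk', rfl⟩ ⟨m - k, by omega, hmm'⟩).elim
    · have := hv'.injOn_edge (show m - k < k' by omega) (show m' - k < k' by omega) hmm'
      omega

lemma IsClosedTrail.not_disjoint_trailEdges {G : SimpleGraph V} {k k' : ℕ} {v v' : ℕ → V}
    (hv : IsClosedTrail G.Adj k v) (hv' : IsClosedTrail G.Adj k' v') (h0 : v' 0 = v 0)
    (hk : 0 < k) (hG : ∀ E, ¬ IsCircuit G (k + k') E) :
    ¬ Disjoint (trailEdges k v) (trailEdges k' v') := fun hdisj =>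
  hG _ ((hv.append hv' h0 hdisj).isCircuit (by omega))

lemma trailEdges_one_const (x : V) : trailEdges 1 (fun _ => x) = {s(x, x)} := by
  ext e
  simp [trailEdges, eq_comm]

lemma IsClosedTrail.withLoop {G : SimpleGraph V} {r : V → V → Prop} {k : ℕ} {v : ℕ → V}
    (hv : IsClosedTrail G.Adj k v) (hGr : ∀ a b, G.Adj a b → r a b) (hloop : r (v 0) (v 0)) :
    IsClosedTrail r (k + 1) (trailAppend k v fun _ => v 0) :=
  (hv.mono hGr).append (.loop hloop) rfl <| by
    rw [trailEdges_one_const]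
    exact Set.disjoint_singleton_right.mpr (hv.diag_not_mem_trailEdges _)

lemma pairwise_disjoint_trailEdges_withLoop {ι : Type*} {G : SimpleGraph V} {k : ι → ℕ}
    {v : ι → ℕ → V} (hv : ∀ i, IsClosedTrail G.Adj (k i) (v i))
    (hdisj : Pairwise (Disjoint on fun i => trailEdges (k i) (v i)))
    (hinj : Injective fun i => v i 0) :
    Pairwise (Disjoint on fun i =>
      trailEdges (k i + 1) (trailAppend (k i) (v i) fun _ => v i 0)) := by
  intro i j hij
  change Disjoint (trailEdges _ _) (trailEdges _ _)
  rw [trailEdges_trailAppend (v' := fun _ => v i 0) (hv i).closed,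
    trailEdges_trailAppend (v' := fun _ => v j 0) (hv j).closed,
    trailEdges_one_const, trailEdges_one_const, Set.disjoint_union_left,
    Set.disjoint_union_right, Set.disjoint_union_right, Set.disjoint_singleton_left,
    Set.disjoint_singleton_right, Set.disjoint_singleton]
  refine ⟨⟨hdisj hij, (hv i).diag_not_mem_trailEdges _⟩, (hv j).diag_not_mem_trailEdges _, ?_⟩
  simpa using hinj.ne hij

end ClosedTrails

section BalancedPairs

open Finset

lemma sum_range_even_pairs_eq_odd_pairs (g : ℕ → ℕ) (J : ℕ) (hg : g (2 * J) = g 0) :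
    ∑ m ∈ range J, (g (2 * m) + g (2 * m + 1)) =
      ∑ m ∈ range J, (g (2 * m + 1) + g (2 * m + 2)) := by
  suffices ∀ J, ∑ m ∈ range J, (g (2 * m) + g (2 * m + 1)) + g (2 * J) =
      g 0 + ∑ m ∈ range J, (g (2 * m + 1) + g (2 * m + 2)) by
    have := this J
    omega
  intro J
  induction J with
  | zero => simp
  | succ J ih =>
    rw [sum_range_succ, sum_range_succ, show 2 * (J + 1) = 2 * J + 2 by ring]
    omega

structure BalancedPairs {ι : Type*} (N : ℕ) (A : Finset ℕ) (B C : ι → Finset ℕ) : Prop where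
  subset_left : ∀ i, B i ⊆ A
  subset_right : ∀ i, C i ⊆ A
  disjoint_left : Pairwise (Disjoint on B)
  disjoint_right : Pairwise (Disjoint on C)
  disjoint_left_right : ∀ i j, Disjoint (B i) (C j)
  nonempty_left : ∀ i, (B i).Nonempty
  factorization_prod_eq :
    ∀ i q, PLM N q → (∏ b ∈ B i, b).factorization q = (∏ c ∈ C i, c).factorization q

variable {N : ℕ} {A : Finset ℕ}

lemma balancedPairs_image (hA : ↑A ⊆ Set.Icc 1 N) {ι : Type*} {J : ι → ℕ} (hJ : ∀ i, 0 < J i)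
    {x : ι → ℕ → ℕ} (hxA : ∀ i, ∀ m < 2 * J i, x i m ∈ A)
    (hinj : ∀ i j m m', m < 2 * J i → m' < 2 * J j → x i m = x j m' → i = j ∧ m = m')
    (hbal : ∀ i q, PLM N q → ∑ m ∈ range (J i), (x i (2 * m)).factorization q =
      ∑ m ∈ range (J i), (x i (2 * m + 1)).factorization q) :
    BalancedPairs N A (fun i => (range (J i)).image fun m => x i (2 * m))
      (fun i => (range (J i)).image fun m => x i (2 * m + 1)) := by
  have hsub : ∀ i (f : ℕ → ℕ), (∀ m < J i, f m < 2 * J i) →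
      (range (J i)).image (fun m => x i (f m)) ⊆ A := fun i f hf b hb => by
    obtain ⟨m, hm, rfl⟩ := mem_image.mp hb
    exact hxA i _ (hf m (mem_range.mp hm))
  have hfac : ∀ i (f : ℕ → ℕ), Injective f → (∀ m < J i, f m < 2 * J i) → ∀ q,
      (∏ b ∈ (range (J i)).image fun m => x i (f m), b).factorization q =
        ∑ m ∈ range (J i), (x i (f m)).factorization q := fun i f hfi hf q => by
    rw [prod_image fun m hm m' hm' h => hfi (hinj i i _ _ (hf m (mem_range.mp hm))
        (hf m' (mem_range.mp hm')) h).2,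
      Nat.factorization_prod fun m hm => Nat.one_le_iff_ne_zero.mp
        (hA (hxA i _ (hf m (mem_range.mp hm)))).1,
      Finsupp.finsetSum_apply]
  refine ⟨fun i => hsub i _ fun m hm => by omega, fun i => hsub i _ fun m hm => by omega,
    fun i j hij => ?_, fun i j hij => ?_, fun i j => ?_,
    fun i => (nonempty_range_iff.mpr (hJ i).ne').image _, fun i q hq => ?_⟩
  · simp only [onFun, disjoint_left, mem_image, mem_range]
    rintro _ ⟨m, hm, rfl⟩ ⟨m', hm', h⟩
    exact hij (hinj j i _ _ (by omega) (by omega) h).1.symm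
  · simp only [onFun, disjoint_left, mem_image, mem_range]
    rintro _ ⟨m, hm, rfl⟩ ⟨m', hm', h⟩
    exact hij (hinj j i _ _ (by omega) (by omega) h).1.symm
  · simp only [disjoint_left, mem_image, mem_range]
    rintro _ ⟨m, hm, rfl⟩ ⟨m', hm', h⟩
    have := (hinj j i _ _ (by omega) (by omega) h).2
    omega
  · rw [hfac i (fun m => 2 * m) (fun m m' h => by simp only at h; omega) (fun m hm => by omega),
      hfac i (fun m => 2 * m + 1) (fun m m' h => by simp only at h; omega)
        (fun m hm => by omega)]
    exact hbal i q hq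

lemma exists_balancedPairs (hA : ↑A ⊆ Set.Icc 1 N) {ι : Type*} {J : ι → ℕ}
    {u : ι → ℕ → ℕ} (hu : ∀ i, IsClosedTrail (LoopedAdj N A) (2 * J i) (u i))
    (hJ : ∀ i, 0 < J i) (hdisj : Pairwise (Disjoint on fun i => trailEdges (2 * J i) (u i))) :
    ∃ B C : ι → Finset ℕ, BalancedPairs N A B C := by
  choose! W hWA hW using fun a b (h : LoopedAdj N A a b) => h.exists_isRealizer hA
  have hx : ∀ i, ∀ m < 2 * J i, IsRealizer N (W (u i m) (u i (m + 1))) (u i m) (u i (m + 1)) :=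
    fun i m hm => hW _ _ ((hu i).adj m hm)
  refine ⟨_, _, balancedPairs_image hA hJ (fun i m hm => hWA _ _ ((hu i).adj m hm))
    (fun i j m m' hm hm' h => ?_) fun i q hq => ?_⟩
  · have he := ((hu i).adj m hm).sym2_eq_of_isRealizer hA ((hu j).adj m' hm') (hx i m hm)
      (h ▸ hx j m' hm')
    obtain rfl : i = j := by_contra fun hij =>
      Set.disjoint_left.mp (hdisj hij) ⟨m, hm, rfl⟩ ⟨m', hm', he.symm⟩
    exact ⟨rfl, (hu i).injOn_edge hm hm' he⟩
  · rw [sum_congr rfl fun m hm => hx i _ (by have := mem_range.mp hm; omega) q hq,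
      sum_congr rfl fun m hm => hx i _ (by have := mem_range.mp hm; omega) q hq]
    simp only [Finsupp.coe_add, Pi.add_apply]
    exact sum_range_even_pairs_eq_odd_pairs (fun m => single (u i m) 1 q) (J i)
      (by simp only [(hu i).closed])

end BalancedPairs

section Counting

open Finset

variable {N : ℕ} {A : Finset ℕ}

def smallPrimes (N : ℕ) : Finset ℕ :=
  (range (N + 1)).filter fun q => q.Prime ∧ q ^ 3 ≤ N

lemma card_smallPrimes_le (N : ℕ) : ((smallPrimes N).card : ℝ) ≤ (N : ℝ) ^ ((1 : ℝ) / 3) := by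
  have hsub : smallPrimes N ⊆ Icc 1 ⌊(N : ℝ) ^ ((1 : ℝ) / 3)⌋₊ := fun q hq => by
    simp only [smallPrimes, mem_filter, mem_range] at hq
    exact mem_Icc.mpr ⟨hq.2.1.one_le, Nat.le_floor (not_lt.mp (rpow_one_third_lt_iff.not.mpr
      (not_lt.mpr hq.2.2)))⟩
  calc ((smallPrimes N).card : ℝ) ≤ ⌊(N : ℝ) ^ ((1 : ℝ) / 3)⌋₊ := by
        exact_mod_cast (card_le_card hsub).trans (by simp)
    _ ≤ (N : ℝ) ^ ((1 : ℝ) / 3) := Nat.floor_le (by positivity)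

lemma factorization_prod_lt {X : Finset ℕ} (hX : ↑X ⊆ Set.Icc 1 N) {q : ℕ} (hq : q.Prime)
    (hN : N ≠ 0) : (∏ x ∈ X, x).factorization q < N := by
  have hdvd : ∏ x ∈ X, x ∣ N.factorial := by
    rw [← prod_Ico_id_eq_factorial]
    exact prod_dvd_prod_of_subset _ _ _ fun x hx =>
      mem_Ico.mpr ⟨(hX hx).1, Nat.lt_succ_of_le (hX hx).2⟩
  have hle := (Nat.factorization_le_iff_dvd (prod_ne_zero_iff.mpr fun x hx =>
    Nat.one_le_iff_ne_zero.mp (hX hx).1) (Nat.factorial_ne_zero N)).mpr hdvd q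
  have : Fact q.Prime := ⟨hq⟩
  rw [Nat.factorization_def N.factorial hq] at hle
  exact hle.trans_lt (padicValNat_factorial_lt_of_ne_zero q hN)

lemma factorization_prod_eq_zero {X : Finset ℕ} (hX : ↑X ⊆ Set.Icc 1 N) {q : ℕ}
    (hq : N < q) : (∏ x ∈ X, x).factorization q = 0 := by
  by_cases hqp : q.Prime
  · refine Nat.factorization_eq_zero_of_not_dvd fun hdvd => ?_
    obtain ⟨x, hx, hqx⟩ := (Prime.dvd_finsetProd_iff hqp.prime _).mp hdvd
    have := Nat.le_of_dvd (hX hx).1 hqx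
    have := (hX hx).2
    omega
  · exact Nat.factorization_eq_zero_of_not_prime _ hqp

def pairSelect {ι : Type*} [Fintype ι] [DecidableEq ι] (B C : ι → Finset ℕ) (T : Finset ι) :
    Finset ℕ :=
  T.biUnion B ∪ Tᶜ.biUnion C

namespace BalancedPairs

variable {ι : Type*} [Fintype ι] [DecidableEq ι] {B C : ι → Finset ℕ}

lemma pairSelect_subset (h : BalancedPairs N A B C) (T : Finset ι) : pairSelect B C T ⊆ A :=
  union_subset (biUnion_subset.mpr fun t _ => h.subset_left t)
    (biUnion_subset.mpr fun t _ => h.subset_right t)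

lemma injective_pairSelect (h : BalancedPairs N A B C) : Injective (pairSelect B C) := by
  have key : ∀ T T', pairSelect B C T = pairSelect B C T' → T ⊆ T' := by
    intro T T' hTT' t ht
    obtain ⟨b, hb⟩ := h.nonempty_left t
    have hbS : b ∈ pairSelect B C T' := hTT' ▸ mem_union_left _ (mem_biUnion.mpr ⟨t, ht, hb⟩)
    rcases mem_union.mp hbS with hbS | hbS
    · obtain ⟨t', ht', hb'⟩ := mem_biUnion.mp hbS
      obtain rfl : t = t' := by_contra fun htt' =>
        Finset.disjoint_left.mp (h.disjoint_left htt') hb hb'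
      exact ht'
    · obtain ⟨t', -, hc⟩ := mem_biUnion.mp hbS
      exact (Finset.disjoint_left.mp (h.disjoint_left_right t t') hb hc).elim
  exact fun T T' hTT' => (key T T' hTT').antisymm (key T' T hTT'.symm)

lemma factorization_prod_pairSelect (hA : ↑A ⊆ Set.Icc 1 N) (h : BalancedPairs N A B C)
    (T : Finset ι) {q : ℕ} (hq : PLM N q) :
    (∏ x ∈ pairSelect B C T, x).factorization q = ∑ t, (∏ c ∈ C t, c).factorization q := by
  have hne : ∀ X ⊆ A, ∏ x ∈ X, x ≠ 0 := fun X hX => prod_ne_zero_iff.mpr fun x hx =>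
    Nat.one_le_iff_ne_zero.mp (hA (hX hx)).1
  rw [pairSelect, prod_union ((disjoint_biUnion_left _ _ _).mpr fun i _ =>
      (disjoint_biUnion_right _ _ _).mpr fun j _ => h.disjoint_left_right i j),
    prod_biUnion (h.disjoint_left.set_pairwise _), prod_biUnion (h.disjoint_right.set_pairwise _),
    Nat.factorization_mul (prod_ne_zero_iff.mpr fun t _ => hne _ (h.subset_left t))
      (prod_ne_zero_iff.mpr fun t _ => hne _ (h.subset_right t)),
    Nat.factorization_prod fun t _ => hne _ (h.subset_left t),
    Nat.factorization_prod fun t _ => hne _ (h.subset_right t)]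
  simp only [Finsupp.add_apply, Finsupp.finsetSum_apply]
  rw [sum_congr rfl fun t _ => h.factorization_prod_eq t q hq, sum_add_sum_compl]

lemma factorization_prod_pairSelect_eq (hA : ↑A ⊆ Set.Icc 1 N) (h : BalancedPairs N A B C)
    (T T' : Finset ι) {q : ℕ} (hq : q ∉ smallPrimes N) :
    (∏ x ∈ pairSelect B C T, x).factorization q = (∏ x ∈ pairSelect B C T', x).factorization q := by
  have hSA : ∀ T, ↑(pairSelect B C T) ⊆ Set.Icc 1 N := fun T =>
    (coe_subset.mpr (h.pairSelect_subset T)).trans hA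
  by_cases hqN : N < q
  · rw [factorization_prod_eq_zero (hSA T) hqN, factorization_prod_eq_zero (hSA T') hqN]
  by_cases hqp : q.Prime
  · have hq : PLM N q := ⟨hqp, rpow_one_third_lt_iff.mpr (by
      simp only [smallPrimes, mem_filter, mem_range, hqp, true_and, not_and, not_le] at hq
      exact hq (by omega)), by omega⟩
    rw [h.factorization_prod_pairSelect hA T hq, h.factorization_prod_pairSelect hA T' hq]
  · simp [Nat.factorization_eq_zero_of_not_prime _ hqp]

lemma two_pow_card_le (hA : ↑A ⊆ Set.Icc 1 N) (hDSP : DistinctSubsetProds ↑A)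
    (h : BalancedPairs N A B C) : 2 ^ Fintype.card ι ≤ N ^ (smallPrimes N).card := by
  have hSA : ∀ T, ↑(pairSelect B C T) ⊆ Set.Icc 1 N := fun T =>
    (coe_subset.mpr (h.pairSelect_subset T)).trans hA
  have hne : ∀ T, ∏ x ∈ pairSelect B C T, x ≠ 0 := fun T => prod_ne_zero_iff.mpr fun x hx =>
    Nat.one_le_iff_ne_zero.mp (hSA T hx).1
  have hsmall : ∀ T T', (∀ q ∈ smallPrimes N, (∏ x ∈ pairSelect B C T, x).factorization q =
      (∏ x ∈ pairSelect B C T', x).factorization q) → T = T' := fun T T' hTT' =>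
    h.injective_pairSelect <| hDSP _ _ (coe_subset.mpr (h.pairSelect_subset T))
      (coe_subset.mpr (h.pairSelect_subset T')) <| Nat.eq_of_factorization_eq (hne T) (hne T')
        fun q => if hq : q ∈ smallPrimes N then hTT' q hq
          else h.factorization_prod_pairSelect_eq hA T T' hq
  have hbound : ∀ T, ∀ q ∈ smallPrimes N, (∏ x ∈ pairSelect B C T, x).factorization q < N :=
    fun T q hq => by
      simp only [smallPrimes, mem_filter, mem_range] at hq
      exact factorization_prod_lt (hSA T) hq.2.1 (by have := hq.2.1.two_le; omega)
  let F : Finset ι → smallPrimes N → Fin N := fun T q => ⟨_, hbound T q q.2⟩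
  calc 2 ^ Fintype.card ι = Fintype.card (Finset ι) := by simp
    _ ≤ Fintype.card (smallPrimes N → Fin N) := Fintype.card_le_of_injective F
        fun T T' hTT' => hsmall T T' fun q hq => congrArg Fin.val (congrFun hTT' ⟨q, hq⟩)
    _ = N ^ (smallPrimes N).card := by simp

end BalancedPairs

end Counting

lemma le_mul_rpow_of_two_pow_le {n N s : ℕ} {ε : ℝ} (hε : 0 < ε) (h : 2 ^ n ≤ N ^ s)
    (hs : (s : ℝ) ≤ (N : ℝ) ^ ((1 : ℝ) / 3)) :
    (n : ℝ) ≤ 1 / (ε * Real.log 2) * (N : ℝ) ^ ((1 : ℝ) / 3 + ε) := by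
  have hlog : (n : ℝ) * Real.log 2 ≤ s * Real.log N := by
    have := Real.log_le_log (by positivity) (by exact_mod_cast h : (2 : ℝ) ^ n ≤ (N : ℝ) ^ s)
    rwa [Real.log_pow, Real.log_pow] at this
  have hlogN : Real.log N ≤ (N : ℝ) ^ ε / ε := Real.log_le_rpow_div (Nat.cast_nonneg N) hε
  rw [Real.rpow_add' (Nat.cast_nonneg N) (by positivity), one_div_mul_eq_div,
    le_div_iff₀ (by positivity)]
  calc (n : ℝ) * (ε * Real.log 2) = ε * (n * Real.log 2) := by ring
    _ ≤ ε * ((N : ℝ) ^ ((1 : ℝ) / 3) * ((N : ℝ) ^ ε / ε)) := mul_le_mul_of_nonneg_left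
        (hlog.trans (mul_le_mul hs hlogN (Real.log_natCast_nonneg N) (by positivity))) hε.le
    _ = (N : ℝ) ^ ((1 : ℝ) / 3) * (N : ℝ) ^ ε := by field_simp

/-- If the prime factorization graph has no even circuit of length at most `2·N^{1/12}`,
and `C_1, …, C_n` are edge sets of pairwise edge-disjoint odd cycles of length at most
`N^{1/12}`, each with a vertex from `P_□`, then `n ≤ C·N^{1/3+ε}`. -/
theorem stmt12 : ∀ ε : ℝ, 0 < ε → ∃ C : ℝ, 0 < C ∧
    ∀ N : ℕ, ∀ A : Finset ℕ, ↑A ⊆ Set.Icc 1 N → DistinctSubsetProds ↑A →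
    (∀ a ∈ A, ∀ b ∈ A, (∀ p : ℕ, PLM N p → padicValNat p a = padicValNat p b) → a = b) →
    (∀ a ∈ A, ∃ p : ℕ, PLM N p ∧ p ∣ a) →
    (∀ k : ℕ, ∀ E : Set (Sym2 ℕ), Even k → (k : ℝ) ≤ 2 * (N : ℝ) ^ ((1 : ℝ) / 12) →
      ¬ IsCircuit (pfGraph N A) k E) →
    ∀ n : ℕ, ∀ Cs : Fin n → Set (Sym2 ℕ), ∀ k : Fin n → ℕ,
    (∀ i, IsCycle (pfGraph N A) (k i) (Cs i)) →
    (∀ i, Odd (k i)) →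
    (∀ i, (k i : ℝ) ≤ (N : ℝ) ^ ((1 : ℝ) / 12)) →
    (∀ i, ∃ p ∈ Psq N A, ∃ e ∈ Cs i, p ∈ e) →
    (∀ i j, i ≠ j → Disjoint (Cs i) (Cs j)) →
    (n : ℝ) ≤ C * (N : ℝ) ^ ((1 : ℝ) / 3 + ε) := by
  intro ε hε
  refine ⟨1 / (ε * Real.log 2), by positivity, ?_⟩
  intro N A hA hDSP _ _ hcirc n Cs k hcyc hodd hk hPsq hdisj
  choose p hp e he hpe using hPsq
  choose v hv0 hv hvE using fun i => (hcyc i).isCircuit.exists_isClosedTrail (he i) (hpe i)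
  have hdisj' : Pairwise (Disjoint on fun i => trailEdges (k i) (v i)) := fun i j hij =>
    (hdisj i j hij).mono (hvE i) (hvE j)
  have hinj : Injective fun i => v i 0 := fun i j hij => by_contra fun hne =>
    (hv i).not_disjoint_trailEdges (hv j) hij.symm (hodd i).pos
      (fun E => hcirc _ E ((hodd i).add_odd (hodd j)) (by push_cast; linarith [hk i, hk j]))
      (hdisj' hne)
  choose j hj using hodd
  have hkj : ∀ i, k i + 1 = 2 * (j i + 1) := fun i => by rw [hj]; ring
  have hu : ∀ i, IsClosedTrail (LoopedAdj N A) (2 * (j i + 1))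
      (trailAppend (k i) (v i) fun _ => v i 0) := fun i =>
    hkj i ▸ (hv i).withLoop (fun _ _ => Or.inl) (Or.inr ⟨rfl, hv0 i ▸ hp i⟩)
  obtain ⟨B, C, hBC⟩ := exists_balancedPairs hA hu (fun i => Nat.succ_pos _) fun i i' hii' => by
    simpa only [hkj] using pairwise_disjoint_trailEdges_withLoop hv hdisj' hinj hii'
  have := hBC.two_pow_card_le hA hDSP
  rw [Fintype.card_fin] at this
  exact le_mul_rpow_of_two_pow_le hε this (card_smallPrimes_le N)
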